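/- Structural congruence on finite CCS processes is included in strong bisimilarity: if P ≡ Q then P and Q are strongly bisimilar with respect to LTS_CCS. -/
import Mathlib


inductive Lab (N : Type) : Type
  | tau : Lab N
  | inp : N → Lab N
  | out : N → Lab N

def Lab.co {N : Type} : Lab N → Lab N
  | .tau => .tau
  | .inp a => .out a
  | .out a => .inp a

/-- `a ∉ α`: the label `α` is neither the name `a` nor its co-name. -/
def Lab.notIn {N : Type} (a : N) : Lab N → Prop
  | .tau => True
  | .inp b => b ≠ a
  | .out b => b ≠ a

/-- Finite CCS processes: `P ::= 0 | λ.P | P|Q | P+Q | P\a`. -/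
inductive Proc (N : Type) : Type
  | nil : Proc N
  | pre : Lab N → Proc N → Proc N
  | par : Proc N → Proc N → Proc N
  | sum : Proc N → Proc N → Proc N
  | res : N → Proc N → Proc N

/-- Free names. -/
def Proc.fn {N : Type} : Proc N → Set N
  | .nil => ∅
  | .pre l P => (match l with | .tau => ∅ | .inp a => {a} | .out a => {a}) ∪ P.fn
  | .par P Q => P.fn ∪ Q.fn
  | .sum P Q => P.fn ∪ Q.fn
  | .res a P => P.fn \ {a}

/-- The labeled transition system LTS_CCS (finite fragment):
rules act., com₁, com₂, syn., sum., res. -/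
inductive Step {N : Type} : Proc N → Lab N → Proc N → Prop
  | act (l : Lab N) (P : Proc N) : Step (.pre l P) l P
  | com1 {P P' Q : Proc N} {α : Lab N} :
      Step P α P' → Step (.par P Q) α (.par P' Q)
  | com2 {P Q Q' : Proc N} {α : Lab N} :
      Step Q α Q' → Step (.par P Q) α (.par P Q')
  | syn {P P' Q Q' : Proc N} {l : Lab N} :
      l ≠ Lab.tau → Step P l P' → Step Q l.co Q' →
      Step (.par P Q) .tau (.par P' Q')
  | sum1 {P P' Q : Proc N} {α : Lab N} :
      Step P α P' → Step (.sum P Q) α P'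
  | sum2 {P Q Q' : Proc N} {α : Lab N} :
      Step Q α Q' → Step (.sum P Q) α Q'
  | res {P P' : Proc N} {α : Lab N} {a : N} :
      Step P α P' → Lab.notIn a α → Step (.res a P) α (.res a P')

/-- Structural congruence on finite CCS processes. -/
inductive SC {N : Type} : Proc N → Proc N → Prop
  | refl (P : Proc N) : SC P P
  | symm {P Q : Proc N} : SC P Q → SC Q P
  | trans {P Q V : Proc N} : SC P Q → SC Q V → SC P V
  | parComm (P Q : Proc N) : SC (.par P Q) (.par Q P)
  | parAssoc (P Q V : Proc N) : SC (.par (.par P Q) V) (.par P (.par Q V))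
  | parNil (P : Proc N) : SC (.par P .nil) P
  | sumComm (P Q : Proc N) : SC (.sum P Q) (.sum Q P)
  | sumAssoc (P Q V : Proc N) : SC (.sum (.sum P Q) V) (.sum P (.sum Q V))
  | sumNil (P : Proc N) : SC (.sum P .nil) P
  | scope (a : N) (P Q : Proc N) : a ∉ Q.fn →
      SC (.par (.res a P) Q) (.res a (.par P Q))
  | resEx (a b : N) (P : Proc N) : SC (.res a (.res b P)) (.res b (.res a P))
  | preCtx (l : Lab N) {P Q : Proc N} : SC P Q → SC (.pre l P) (.pre l Q)
  | parCtx {P P' Q Q' : Proc N} : SC P P' → SC Q Q' → SC (.par P Q) (.par P' Q')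
  | sumCtx {P P' Q Q' : Proc N} : SC P P' → SC Q Q' → SC (.sum P Q) (.sum P' Q')
  | resCtx (a : N) {P Q : Proc N} : SC P Q → SC (.res a P) (.res a Q)

/-- `R` is a strong bisimulation for the transition relation `T`. -/
def IsBisim {N : Type} (T : Proc N → Lab N → Proc N → Prop)
    (R : Proc N → Proc N → Prop) : Prop :=
  ∀ P Q, R P Q →
    (∀ α P', T P α P' → ∃ Q', T Q α Q' ∧ R P' Q') ∧
    (∀ α Q', T Q α Q' → ∃ P', T P α P' ∧ R P' Q')

/-- Strong bisimilarity: the union of all strong bisimulations. -/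
def Bisim {N : Type} (T : Proc N → Lab N → Proc N → Prop) (P Q : Proc N) : Prop :=
  ∃ R, IsBisim T R ∧ R P Q


section Aux
variable {N : Type}

lemma Lab.co_co (α : Lab N) : α.co.co = α := by cases α <;> rfl

lemma Lab.co_ne_tau {l : Lab N} (h : l ≠ .tau) : l.co ≠ .tau := by
  cases l <;> simp_all [Lab.co]

def labFn : Lab N → Set N
  | .tau => ∅
  | .inp a => {a}
  | .out a => {a}

lemma labFn_co (α : Lab N) : labFn α.co = labFn α := by cases α <;> rfl

lemma notIn_iff (a : N) (α : Lab N) : α.notIn a ↔ a ∉ labFn α := by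
  cases α <;> simp [Lab.notIn, labFn, eq_comm]

lemma step_fn {P P' : Proc N} {α : Lab N} (h : Step P α P') :
    labFn α ⊆ P.fn ∧ P'.fn ⊆ P.fn := by
  induction h with
  | act l P =>
      constructor
      · intro x hx; exact Or.inl (by cases l <;> simpa [labFn] using hx)
      · intro x hx; exact Or.inr hx
  | com1 h ih =>
      exact ⟨fun x hx => Or.inl (ih.1 hx),
        fun x hx => hx.elim (fun h => Or.inl (ih.2 h)) Or.inr⟩
  | com2 h ih =>
      exact ⟨fun x hx => Or.inr (ih.1 hx),
        fun x hx => hx.elim Or.inl (fun h => Or.inr (ih.2 h))⟩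
  | syn hne h1 h2 ih1 ih2 =>
      exact ⟨fun x hx => hx.elim,
        fun x hx => hx.elim (fun h => Or.inl (ih1.2 h)) (fun h => Or.inr (ih2.2 h))⟩
  | sum1 h ih => exact ⟨fun x hx => Or.inl (ih.1 hx), fun x hx => Or.inl (ih.2 hx)⟩
  | sum2 h ih => exact ⟨fun x hx => Or.inr (ih.1 hx), fun x hx => Or.inr (ih.2 hx)⟩
  | res h hni ih =>
      constructor
      · intro x hx
        refine ⟨ih.1 hx, ?_⟩
        intro hxa; subst hxa
        exact ((notIn_iff _ _).mp hni) hx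
      · intro x hx; exact ⟨ih.2 hx.1, hx.2⟩

lemma notIn_of_step {a : N} {Q Q' : Proc N} {α : Lab N} (hQ : Step Q α Q')
    (ha : a ∉ Q.fn) : α.notIn a :=
  (notIn_iff a α).mpr fun hx => ha ((step_fn hQ).1 hx)

lemma fn_of_step {a : N} {Q Q' : Proc N} {α : Lab N} (hQ : Step Q α Q')
    (ha : a ∉ Q.fn) : a ∉ Q'.fn := fun hx => ha ((step_fn hQ).2 hx)

lemma parComm_sim (P Q : Proc N) (α : Lab N) (X : Proc N)
    (h : Step (.par P Q) α X) : ∃ Y, Step (.par Q P) α Y ∧ SC X Y := by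
  cases h with
  | com1 h => exact ⟨_, .com2 h, .parComm _ _⟩
  | com2 h => exact ⟨_, .com1 h, .parComm _ _⟩
  | syn hne h1 h2 =>
      exact ⟨_, .syn (Lab.co_ne_tau hne) h2 (by rw [Lab.co_co]; exact h1),
        .parComm _ _⟩

lemma parAssoc_fwd (P Q V : Proc N) (α : Lab N) (X : Proc N)
    (h : Step (.par (.par P Q) V) α X) :
    ∃ Y, Step (.par P (.par Q V)) α Y ∧ SC X Y := by
  cases h with
  | com1 h1 =>
      cases h1 with
      | com1 h => exact ⟨_, .com1 h, .parAssoc _ _ _⟩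
      | com2 h => exact ⟨_, .com2 (.com1 h), .parAssoc _ _ _⟩
      | syn hne hP hQ => exact ⟨_, .syn hne hP (.com1 hQ), .parAssoc _ _ _⟩
  | com2 h => exact ⟨_, .com2 (.com2 h), .parAssoc _ _ _⟩
  | syn hne h1 hV =>
      cases h1 with
      | com1 hP => exact ⟨_, .syn hne hP (.com2 hV), .parAssoc _ _ _⟩
      | com2 hQ => exact ⟨_, .com2 (.syn hne hQ hV), .parAssoc _ _ _⟩
      | syn => exact absurd rfl hne

lemma parAssoc_bwd (P Q V : Proc N) (α : Lab N) (X : Proc N)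
    (h : Step (.par P (.par Q V)) α X) :
    ∃ Y, Step (.par (.par P Q) V) α Y ∧ SC Y X := by
  cases h with
  | com1 h => exact ⟨_, .com1 (.com1 h), .parAssoc _ _ _⟩
  | com2 h2 =>
      cases h2 with
      | com1 hQ => exact ⟨_, .com1 (.com2 hQ), .parAssoc _ _ _⟩
      | com2 hV => exact ⟨_, .com2 hV, .parAssoc _ _ _⟩
      | syn hne hQ hV => exact ⟨_, .syn hne (.com2 hQ) hV, .parAssoc _ _ _⟩
  | @syn _ _ _ _ l hne hP h2 =>
      have hcone := Lab.co_ne_tau hne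
      generalize hl : Lab.co l = lc at h2
      cases h2 with
      | com1 hQ => subst hl; exact ⟨_, .com1 (.syn hne hP hQ), .parAssoc _ _ _⟩
      | com2 hV => subst hl; exact ⟨_, .syn hne (.com1 hP) hV, .parAssoc _ _ _⟩
      | syn hne2 hQ hV => exact absurd hl hcone

lemma scope_fwd {a : N} (P Q : Proc N) (ha : a ∉ Q.fn) (α : Lab N) (X : Proc N)
    (h : Step (.par (.res a P) Q) α X) :
    ∃ Y, Step (.res a (.par P Q)) α Y ∧ SC X Y := by
  cases h with
  | com1 h1 =>
      cases h1 with
      | res hP hni => exact ⟨_, .res (.com1 hP) hni, .scope a _ _ ha⟩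
  | com2 hQ =>
      exact ⟨_, .res (.com2 hQ) (notIn_of_step hQ ha),
        .scope a _ _ (fn_of_step hQ ha)⟩
  | syn hne h1 hQ =>
      cases h1 with
      | res hP hni =>
          exact ⟨_, .res (.syn hne hP hQ) trivial,
            .scope a _ _ (fn_of_step hQ ha)⟩

lemma scope_bwd {a : N} (P Q : Proc N) (ha : a ∉ Q.fn) (α : Lab N) (X : Proc N)
    (h : Step (.res a (.par P Q)) α X) :
    ∃ Y, Step (.par (.res a P) Q) α Y ∧ SC Y X := by
  cases h with
  | res h1 hni =>
      cases h1 with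
      | com1 hP => exact ⟨_, .com1 (.res hP hni), .scope a _ _ ha⟩
      | com2 hQ => exact ⟨_, .com2 hQ, .scope a _ _ (fn_of_step hQ ha)⟩
      | syn hne hP hQ =>
          have hco := notIn_of_step hQ ha
          have : Lab.notIn a _ := (notIn_iff _ _).mpr
            (by rw [← labFn_co]; exact (notIn_iff _ _).mp hco)
          exact ⟨_, .syn hne (.res hP this) hQ,
            .scope a _ _ (fn_of_step hQ ha)⟩

lemma resEx_sim (a b : N) (P : Proc N) (α : Lab N) (X : Proc N)
    (h : Step (.res a (.res b P)) α X) :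
    ∃ Y, Step (.res b (.res a P)) α Y ∧ SC X Y := by
  cases h with
  | res h1 hna =>
      cases h1 with
      | res hP hnb => exact ⟨_, .res (.res hP hna) hnb, .resEx a b _⟩

lemma sumAssoc_fwd (P Q V : Proc N) (α : Lab N) (X : Proc N)
    (h : Step (.sum (.sum P Q) V) α X) : Step (.sum P (.sum Q V)) α X := by
  cases h with
  | sum1 h1 => cases h1 with
      | sum1 h => exact .sum1 h
      | sum2 h => exact .sum2 (.sum1 h)
  | sum2 h => exact .sum2 (.sum2 h)

lemma sumAssoc_bwd (P Q V : Proc N) (α : Lab N) (X : Proc N)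
    (h : Step (.sum P (.sum Q V)) α X) : Step (.sum (.sum P Q) V) α X := by
  cases h with
  | sum1 h => exact .sum1 (.sum1 h)
  | sum2 h2 => cases h2 with
      | sum1 h => exact .sum1 (.sum2 h)
      | sum2 h => exact .sum2 h

lemma sc_sim {P Q : Proc N} (h : SC P Q) :
    (∀ α P', Step P α P' → ∃ Q', Step Q α Q' ∧ SC P' Q') ∧
    (∀ α Q', Step Q α Q' → ∃ P', Step P α P' ∧ SC P' Q') := by
  induction h with
  | refl P => exact ⟨fun α P' h => ⟨P', h, .refl _⟩, fun α Q' h => ⟨Q', h, .refl _⟩⟩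
  | symm h ih =>
      exact ⟨fun α P' hs => (ih.2 α P' hs).imp fun Q' ⟨h1, h2⟩ => ⟨h1, h2.symm⟩,
        fun α Q' hs => (ih.1 α Q' hs).imp fun P' ⟨h1, h2⟩ => ⟨h1, h2.symm⟩⟩
  | trans h1 h2 ih1 ih2 =>
      constructor
      · intro α P' hs
        obtain ⟨Y, hY, hsc⟩ := ih1.1 α P' hs
        obtain ⟨Z, hZ, hsc2⟩ := ih2.1 α Y hY
        exact ⟨Z, hZ, hsc.trans hsc2⟩
      · intro α Q' hs
        obtain ⟨Y, hY, hsc⟩ := ih2.2 α Q' hs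
        obtain ⟨Z, hZ, hsc2⟩ := ih1.2 α Y hY
        exact ⟨Z, hZ, hsc2.trans hsc⟩
  | parComm P Q =>
      exact ⟨fun α X h => parComm_sim P Q α X h,
        fun α X h => (parComm_sim Q P α X h).imp fun Y ⟨h1, h2⟩ => ⟨h1, h2.symm⟩⟩
  | parAssoc P Q V =>
      exact ⟨fun α X h => parAssoc_fwd P Q V α X h,
        fun α X h => parAssoc_bwd P Q V α X h⟩
  | parNil P =>
      constructor
      · intro α X h
        cases h with
        | com1 h => exact ⟨_, h, .parNil _⟩
        | com2 h => cases h
        | syn _ _ h => cases h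
      · intro α X h
        exact ⟨_, .com1 h, .parNil _⟩
  | sumComm P Q =>
      constructor
      · intro α X h
        cases h with
        | sum1 h => exact ⟨_, .sum2 h, .refl _⟩
        | sum2 h => exact ⟨_, .sum1 h, .refl _⟩
      · intro α X h
        cases h with
        | sum1 h => exact ⟨_, .sum2 h, .refl _⟩
        | sum2 h => exact ⟨_, .sum1 h, .refl _⟩
  | sumAssoc P Q V =>
      exact ⟨fun α X h => ⟨X, sumAssoc_fwd P Q V α X h, .refl _⟩,
        fun α X h => ⟨X, sumAssoc_bwd P Q V α X h, .refl _⟩⟩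
  | sumNil P =>
      constructor
      · intro α X h
        cases h with
        | sum1 h => exact ⟨_, h, .refl _⟩
        | sum2 h => cases h
      · intro α X h
        exact ⟨_, .sum1 h, .refl _⟩
  | scope a P Q ha =>
      exact ⟨fun α X h => scope_fwd P Q ha α X h,
        fun α X h => scope_bwd P Q ha α X h⟩
  | resEx a b P =>
      exact ⟨fun α X h => resEx_sim a b P α X h,
        fun α X h => (resEx_sim b a P α X h).imp fun Y ⟨h1, h2⟩ => ⟨h1, h2.symm⟩⟩
  | preCtx l h ih =>
      constructor
      · intro α X hs
        cases hs
        exact ⟨_, .act l _, h⟩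
      · intro α X hs
        cases hs
        exact ⟨_, .act l _, h⟩
  | parCtx h1 h2 ih1 ih2 =>
      constructor
      · intro α X hs
        cases hs with
        | com1 h =>
            obtain ⟨Y, hY, hsc⟩ := ih1.1 _ _ h
            exact ⟨_, .com1 hY, .parCtx hsc h2⟩
        | com2 h =>
            obtain ⟨Y, hY, hsc⟩ := ih2.1 _ _ h
            exact ⟨_, .com2 hY, .parCtx h1 hsc⟩
        | syn hne hl hr =>
            obtain ⟨Y1, hY1, hsc1⟩ := ih1.1 _ _ hl
            obtain ⟨Y2, hY2, hsc2⟩ := ih2.1 _ _ hr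
            exact ⟨_, .syn hne hY1 hY2, .parCtx hsc1 hsc2⟩
      · intro α X hs
        cases hs with
        | com1 h =>
            obtain ⟨Y, hY, hsc⟩ := ih1.2 _ _ h
            exact ⟨_, .com1 hY, .parCtx hsc h2⟩
        | com2 h =>
            obtain ⟨Y, hY, hsc⟩ := ih2.2 _ _ h
            exact ⟨_, .com2 hY, .parCtx h1 hsc⟩
        | syn hne hl hr =>
            obtain ⟨Y1, hY1, hsc1⟩ := ih1.2 _ _ hl
            obtain ⟨Y2, hY2, hsc2⟩ := ih2.2 _ _ hr
            exact ⟨_, .syn hne hY1 hY2, .parCtx hsc1 hsc2⟩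
  | sumCtx h1 h2 ih1 ih2 =>
      constructor
      · intro α X hs
        cases hs with
        | sum1 h =>
            obtain ⟨Y, hY, hsc⟩ := ih1.1 _ _ h
            exact ⟨_, .sum1 hY, hsc⟩
        | sum2 h =>
            obtain ⟨Y, hY, hsc⟩ := ih2.1 _ _ h
            exact ⟨_, .sum2 hY, hsc⟩
      · intro α X hs
        cases hs with
        | sum1 h =>
            obtain ⟨Y, hY, hsc⟩ := ih1.2 _ _ h
            exact ⟨_, .sum1 hY, hsc⟩
        | sum2 h =>
            obtain ⟨Y, hY, hsc⟩ := ih2.2 _ _ h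
            exact ⟨_, .sum2 hY, hsc⟩
  | resCtx a h ih =>
      constructor
      · intro α X hs
        cases hs with
        | res hP hni =>
            obtain ⟨Y, hY, hsc⟩ := ih.1 _ _ hP
            exact ⟨_, .res hY hni, .resCtx a hsc⟩
      · intro α X hs
        cases hs with
        | res hP hni =>
            obtain ⟨Y, hY, hsc⟩ := ih.2 _ _ hP
            exact ⟨_, .res hY hni, .resCtx a hsc⟩

end Aux

/-- structural congruence is included in strong bisimilarity. -/
theorem sc_subset_bisim {N : Type} {P Q : Proc N} (h : SC P Q) :
    Bisim Step P Q :=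
  ⟨SC, fun P Q h => sc_sim h, h⟩
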